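/- arXiv:hep-th/9908008 — 5 statements merged into one kernel-verified Lean document; each statement's English description precedes it below -/
import Mathlib

section
/- Let k and k' be integers with k ≥ 2 and k' ≥ 2. Then there exist natural numbers a, b with 0 < a < k, 0 < b < k', and a·k' + b·k = k·k' (equivalently a/k + b/k' = 1) if and only if gcd(k, k') > 1. -/
/-- Arithmetic core of Corollary A.2: for integers `k, k' ≥ 2`, there exist
`0 < a < k` and `0 < b < k'` with `a·k' + b·k = k·k'` (i.e. `a/k + b/k' = 1`)
iff `gcd(k, k') > 1`. -/
theorem stmt_2 (k k' : ℕ) (hk : 2 ≤ k) (hk' : 2 ≤ k') :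
    (∃ a b : ℕ, 0 < a ∧ a < k ∧ 0 < b ∧ b < k' ∧ a * k' + b * k = k * k') ↔
      1 < Nat.gcd k k' := by
  have hk0 : 0 < k := by omega
  have hk'0 : 0 < k' := by omega
  constructor
  · rintro ⟨a, b, ha0, hak, hb0, hbk, heq⟩
    by_contra h
    have hcop : Nat.Coprime k k' := by
      have := Nat.gcd_pos_of_pos_left k' hk0
      unfold Nat.Coprime; omega
    have hdvd : k ∣ a * k' := ⟨k' - b, by
      have h2 : k * (k' - b) = k * k' - k * b := Nat.mul_sub k k' b
      have h3 : b * k = k * b := Nat.mul_comm b k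
      have h4 : k * b ≤ k * k' := Nat.mul_le_mul_left k (le_of_lt hbk)
      omega⟩
    have : k ∣ a := (Nat.Coprime.dvd_of_dvd_mul_right hcop) hdvd
    have := Nat.le_of_dvd ha0 this
    omega
  · intro h
    set d := Nat.gcd k k' with hd
    obtain ⟨m, hm⟩ := Nat.gcd_dvd_left k k'
    obtain ⟨n, hn⟩ := Nat.gcd_dvd_right k k'
    have hd0 : 0 < d := by omega
    have hm0 : 0 < m := by nlinarith
    have hn0 : 0 < n := by nlinarith
    have hmk : m < k := by nlinarith
    have hnk : n < k' := by nlinarith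
    refine ⟨m, k' - n, hm0, hmk, by omega, by omega, ?_⟩
    have h1 : m * k' = n * k := by
      calc m * k' = m * (d * n) := by rw [hn]
      _ = (d * m) * n := by ring
      _ = n * k := by rw [← hm]; ring
    have h2 : (k' - n) * k = k' * k - n * k := by rw [Nat.sub_mul]
    have h3 : n * k ≤ k' * k := Nat.mul_le_mul_right k (le_of_lt hnk)
    rw [h2, h1]
    have : k' * k = k * k' := Nat.mul_comm k' k
    omega
end

section
/- Let k, k' ≥ 2 be odd integers, let ζ ∈ ℂ be a primitive k-th root of unity and ξ ∈ ℂ a primitive k'-th root of unity. Let α₁, α₂, α₃ be integers with α₁+α₂+α₃ ≡ 0 (mod k) and gcd(k, αᵢ) = 1 for all i, and let α'₁, α'₂, α'₃ be integers with α'₁+α'₂+α'₃ ≡ 0 (mod k') and gcd(k', α'ᵢ) = 1 for all i. Consider the representation of ℤ_k × ℤ_{k'} on ℂ³ sending (s,t) to the diagonal matrix diag(ζ^{s·α₁}ξ^{t·α'₁}, ζ^{s·α₂}ξ^{t·α'₂}, ζ^{s·α₃}ξ^{t·α'₃}). Then the following are equivalent: (i) for all integers s, t such that not (k ∣ s and k'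 ∣ t), one has ζ^{s·αᵢ}·ξ^{t·α'ᵢ} ≠ 1 for every i ∈ {1,2,3} (i.e. no non-identity element of ℤ_k × ℤ_{k'} is represented by a matrix with eigenvalue 1); (ii) gcd(k, k') = 1. -/
/-- Corollary A.2: for odd `k, k' ≥ 2`, `ζ, ξ` primitive `k`-th and `k'`-th roots of
unity, and exponent data `α, α'` satisfying the SU(3) and coprimality conditions,
no non-identity element `(s,t)` of `ℤ_k × ℤ_{k'}`, acting on `ℂ³` as
`diag(ζ^{sα₁}ξ^{tα'₁}, ζ^{sα₂}ξ^{tα'₂}, ζ^{sα₃}ξ^{tα'₃})`, has `1` as an eigenvalue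
iff `k` and `k'` are coprime. -/
theorem stmt_3 (k k' : ℕ) (hk : 2 ≤ k) (hk' : 2 ≤ k')
    (hkodd : Odd k) (hk'odd : Odd k')
    (ζ ξ : ℂ) (hζ : IsPrimitiveRoot ζ k) (hξ : IsPrimitiveRoot ξ k')
    (α α' : Fin 3 → ℤ)
    (hsum : (k : ℤ) ∣ (α 0 + α 1 + α 2)) (hsum' : (k' : ℤ) ∣ (α' 0 + α' 1 + α' 2))
    (hgcd : ∀ i : Fin 3, Int.gcd (k : ℤ) (α i) = 1)
    (hgcd' : ∀ i : Fin 3, Int.gcd (k' : ℤ) (α' i) = 1) :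
    (∀ s t : ℤ, ¬((k : ℤ) ∣ s ∧ (k' : ℤ) ∣ t) →
        ∀ i : Fin 3, ζ ^ (s * α i) * ξ ^ (t * α' i) ≠ 1) ↔
      Nat.gcd k k' = 1 := by
  have hkpos : 0 < k := by omega
  have hk'pos : 0 < k' := by omega
  have hζ0 : ζ ≠ 0 := hζ.ne_zero (by omega)
  have hξ0 : ξ ≠ 0 := hξ.ne_zero (by omega)
  constructor
  · -- ⇒ : contrapositive
    intro H
    by_contra hne
    set d := Nat.gcd k k' with hd
    have hdk : d ∣ k := Nat.gcd_dvd_left k k'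
    have hdk' : d ∣ k' := Nat.gcd_dvd_right k k'
    have hdpos : 0 < d := Nat.gcd_pos_of_pos_left _ hkpos
    have hd2 : 2 ≤ d := by omega
    obtain ⟨e, he⟩ := hdk
    obtain ⟨e', he'⟩ := hdk'
    have hepos : 0 < e := Nat.pos_of_ne_zero (by rintro rfl; rw [mul_zero] at he; omega)
    have he'pos : 0 < e' := Nat.pos_of_ne_zero (by rintro rfl; rw [mul_zero] at he'; omega)
    have helt : e < k := by nlinarith
    -- ζ^e and ξ^e' are primitive d-th roots of unity
    have hζd : IsPrimitiveRoot (ζ ^ e) d := hζ.pow hkpos (by rw [he, mul_comm])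
    have hξd : IsPrimitiveRoot (ξ ^ e') d := hξ.pow hk'pos (by rw [he', mul_comm])
    have : NeZero d := ⟨by omega⟩
    -- (ζ^e)⁻¹ is a d-th root of unity, hence a power of ξ^e'
    have hinv : ((ζ : ℂ) ^ e)⁻¹ ^ d = 1 := by
      rw [inv_pow, ← pow_mul, mul_comm e d, ← he, hζ.pow_eq_one, inv_one]
    obtain ⟨m, hm, hmeq⟩ := hξd.eq_pow_of_pow_eq_one hinv
    -- Bezout for (k, α 0) and (k', α' 0)
    have hc : IsCoprime (k : ℤ) (α 0) := Int.isCoprime_iff_gcd_eq_one.mpr (hgcd 0)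
    have hc' : IsCoprime (k' : ℤ) (α' 0) := Int.isCoprime_iff_gcd_eq_one.mpr (hgcd' 0)
    obtain ⟨u, v, huv⟩ := hc
    obtain ⟨u', v', huv'⟩ := hc'
    set s : ℤ := (e : ℤ) * v with hs
    set t : ℤ := ((e' : ℤ) * m) * v' with ht
    -- ζ^(s * α 0) = ζ^e
    have h1 : ζ ^ (s * α 0) = ζ ^ (e : ℤ) := by
      have hdvd : (k : ℤ) ∣ s * α 0 - (e : ℤ) := ⟨-((e : ℤ) * u), by linear_combination (e : ℤ) * huv⟩
      have : ζ ^ (s * α 0 - (e : ℤ)) = 1 := (hζ.zpow_eq_one_iff_dvd _).mpr hdvd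
      calc ζ ^ (s * α 0) = ζ ^ (s * α 0 - (e : ℤ)) * ζ ^ (e : ℤ) := by
            rw [← zpow_add₀ hζ0]; ring_nf
        _ = ζ ^ (e : ℤ) := by rw [this, one_mul]
    have h2 : ξ ^ (t * α' 0) = ξ ^ ((e' : ℤ) * m) := by
      have hdvd : (k' : ℤ) ∣ t * α' 0 - ((e' : ℤ) * m) :=
        ⟨-((e' : ℤ) * m * u'), by linear_combination ((e' : ℤ) * m) * huv'⟩
      have : ξ ^ (t * α' 0 - ((e' : ℤ) * m)) = 1 := (hξ.zpow_eq_one_iff_dvd _).mpr hdvd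
      calc ξ ^ (t * α' 0) = ξ ^ (t * α' 0 - ((e' : ℤ) * m)) * ξ ^ ((e' : ℤ) * m) := by
            rw [← zpow_add₀ hξ0]; ring_nf
        _ = ξ ^ ((e' : ℤ) * m) := by rw [this, one_mul]
    have hprod : ζ ^ (s * α 0) * ξ ^ (t * α' 0) = 1 := by
      rw [h1, h2]
      have : ξ ^ ((e' : ℤ) * m) = (ζ ^ (e : ℤ))⁻¹ := by
        rw [show ((e' : ℤ) * m) = ((e' * m : ℕ) : ℤ) by push_cast; ring, zpow_natCast,
          pow_mul, hmeq, zpow_natCast]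
      rw [this, mul_inv_cancel₀ (zpow_ne_zero _ hζ0)]
    -- k does not divide s
    have hks : ¬ (k : ℤ) ∣ s := by
      intro hdvds
      have h3 : ζ ^ (s * α 0) = 1 := (hζ.zpow_eq_one_iff_dvd _).mpr (hdvds.mul_right _)
      rw [h1] at h3
      have := (hζ.zpow_eq_one_iff_dvd _).mp h3
      have := Int.le_of_dvd (by exact_mod_cast hepos) this
      exact_mod_cast absurd this (by exact_mod_cast Nat.not_le.mpr helt)
    exact H s t (fun h => hks h.1) 0 hprod
  · -- ⇐
    intro hcop s t hst i heq
    have hco : IsCoprime (k : ℤ) (k' : ℤ) := by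
      rw [Int.isCoprime_iff_gcd_eq_one]; exact_mod_cast hcop
    -- ζ^(s α i * k') = 1
    have hz : ζ ^ (s * α i * (k' : ℤ)) = 1 := by
      have hξk : ξ ^ (t * α' i * (k' : ℤ)) = 1 :=
        (hξ.zpow_eq_one_iff_dvd _).mpr ⟨t * α' i, by ring⟩
      have h4 : ζ ^ (s * α i * (k' : ℤ)) * ξ ^ (t * α' i * (k' : ℤ)) = 1 := by
        rw [zpow_mul ζ (s * α i) (k' : ℤ), zpow_mul ξ (t * α' i) (k' : ℤ), ← mul_zpow,
          heq, one_zpow]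
      rwa [hξk, mul_one] at h4
    have hw : ξ ^ (t * α' i * (k : ℤ)) = 1 := by
      have hζk : ζ ^ (s * α i * (k : ℤ)) = 1 :=
        (hζ.zpow_eq_one_iff_dvd _).mpr ⟨s * α i, by ring⟩
      have h4 : ζ ^ (s * α i * (k : ℤ)) * ξ ^ (t * α' i * (k : ℤ)) = 1 := by
        rw [zpow_mul ζ (s * α i) (k : ℤ), zpow_mul ξ (t * α' i) (k : ℤ), ← mul_zpow,
          heq, one_zpow]
      rwa [hζk, one_mul] at h4
    have hdvd1 : (k : ℤ) ∣ s * α i * (k' : ℤ) := (hζ.zpow_eq_one_iff_dvd _).mp hz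
    have hdvd2 : (k' : ℤ) ∣ t * α' i * (k : ℤ) := (hξ.zpow_eq_one_iff_dvd _).mp hw
    have hks : (k : ℤ) ∣ s := by
      have h5 : (k : ℤ) ∣ s * α i := hco.dvd_of_dvd_mul_right hdvd1
      have hcα : IsCoprime (k : ℤ) (α i) := Int.isCoprime_iff_gcd_eq_one.mpr (hgcd i)
      exact hcα.dvd_of_dvd_mul_right h5
    have hk't : (k' : ℤ) ∣ t := by
      have h5 : (k' : ℤ) ∣ t * α' i := hco.symm.dvd_of_dvd_mul_right hdvd2
      have hcα : IsCoprime (k' : ℤ) (α' i) := Int.isCoprime_iff_gcd_eq_one.mpr (hgcd' i)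
      exact hcα.dvd_of_dvd_mul_right h5
    exact hst ⟨hks, hk't⟩
end

section
/- Let Γ be a finite commutative group of 3×3 complex matrices, each of which is unitary with determinant 1 (i.e. Γ is a finite abelian subgroup of SU(3)). Suppose that no element g ∈ Γ with g ≠ I has 1 as an eigenvalue (equivalently, det(g − I) ≠ 0 for all g ≠ I in Γ). Then Γ is cyclic and the order of Γ is odd. -/
open Matrix Module

/-- A finite commuting family of matrices over ℂ has a common eigenvector. -/
private theorem exists_common_eigvec
    {Γ : Subgroup (Matrix.unitaryGroup (Fin 3) ℂ)} [Finite Γ]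
    (hcomm : ∀ g h : Γ, g * h = h * g) :
    ∃ v : Fin 3 → ℂ, v ≠ 0 ∧ ∀ g : Γ,
      ∃ c : ℂ, ((g : Matrix.unitaryGroup (Fin 3) ℂ) : Matrix (Fin 3) (Fin 3) ℂ) *ᵥ v = c • v := by
  classical
  haveI : Fintype Γ := Fintype.ofFinite Γ
  set M : Γ → Matrix (Fin 3) (Fin 3) ℂ := fun g => ((g : Matrix.unitaryGroup (Fin 3) ℂ) : Matrix (Fin 3) (Fin 3) ℂ) with hMdef
  have hMmul : ∀ g h : Γ, M (g * h) = M g * M h := fun g h => rfl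
  have hMcomm : ∀ g h : Γ, M g * M h = M h * M g := by
    intro g h
    rw [← hMmul, ← hMmul, hcomm]
  have key : ∀ S : Finset Γ, ∃ W : Submodule ℂ (Fin 3 → ℂ), W ≠ ⊥ ∧
      (∀ (g : Γ), ∀ v ∈ W, M g *ᵥ v ∈ W) ∧
      (∀ g ∈ S, ∃ c : ℂ, ∀ v ∈ W, M g *ᵥ v = c • v) := by
    intro S
    induction S using Finset.induction with
    | empty =>
      refine ⟨⊤, ?_, fun _ _ _ => trivial, by simp⟩
      intro h
      have h1 : (fun _ => (1 : ℂ)) ∈ (⊤ : Submodule ℂ (Fin 3 → ℂ)) := trivial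
      rw [h, Submodule.mem_bot] at h1
      simpa using congrFun h1 0
    | @insert a S ha ih =>
      obtain ⟨W, hW, hinv, hsc⟩ := ih
      haveI : Nontrivial W := Submodule.nontrivial_iff_ne_bot.mpr hW
      have hres : ∀ x ∈ W, (M a).mulVecLin x ∈ W := by
        intro x hx; simpa using hinv a x hx
      set f : W →ₗ[ℂ] W := ((M a).mulVecLin).restrict hres with hf
      obtain ⟨c, hc⟩ := Module.End.exists_eigenvalue f
      obtain ⟨v, hv⟩ := hc.exists_hasEigenvector
      have hveq : M a *ᵥ (v : Fin 3 → ℂ) = c • (v : Fin 3 → ℂ) := by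
        have h1 : f v = c • v := Module.End.mem_eigenspace_iff.mp hv.1
        have h2 := congrArg (Subtype.val) h1
        simpa [hf, LinearMap.restrict_apply] using h2
      refine ⟨W ⊓ Module.End.eigenspace ((M a).mulVecLin) c, ?_, ?_, ?_⟩
      · rw [Submodule.ne_bot_iff]
        refine ⟨(v : Fin 3 → ℂ), ⟨v.2, ?_⟩, ?_⟩
        · simp only [SetLike.mem_coe, Module.End.mem_eigenspace_iff]; simpa using hveq
        · simpa [Submodule.coe_eq_zero] using hv.2
      · rintro g x ⟨hxW, hxE⟩
        simp only [SetLike.mem_coe, Module.End.mem_eigenspace_iff] at hxE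
        simp only [Matrix.mulVecLin_apply] at hxE
        refine ⟨hinv g x hxW, ?_⟩
        simp only [SetLike.mem_coe, Module.End.mem_eigenspace_iff]
        simp only [Matrix.mulVecLin_apply]
        rw [Matrix.mulVec_mulVec, hMcomm a g, ← Matrix.mulVec_mulVec, hxE,
          Matrix.mulVec_smul]
      · intro g hg
        rcases Finset.mem_insert.mp hg with h | h
        · subst h
          refine ⟨c, ?_⟩
          rintro x ⟨_, hxE⟩
          simp only [SetLike.mem_coe, Module.End.mem_eigenspace_iff] at hxE
          simpa using hxE
        · obtain ⟨cg, hcg⟩ := hsc g h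
          exact ⟨cg, fun x hx => hcg x hx.1⟩
  obtain ⟨W, hW, _, hsc⟩ := key Finset.univ
  obtain ⟨v, hvW, hv0⟩ := Submodule.exists_mem_ne_zero_of_ne_bot hW
  refine ⟨v, hv0, fun g => ?_⟩
  obtain ⟨c, hc⟩ := hsc g (Finset.mem_univ g)
  exact ⟨c, hc v hvW⟩

/-- Group-theoretic content of Corollary 1.2: a finite abelian subgroup `Γ` of
`SU(3)` (here realized as a finite commutative subgroup of the unitary group whose
elements all have determinant `1`) such that no non-identity element has `1` as an
eigenvalue (i.e. `det(g - I) ≠ 0` for `g ≠ I`) is cyclic of odd order. -/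
theorem stmt_4 (Γ : Subgroup (Matrix.unitaryGroup (Fin 3) ℂ)) [Finite Γ]
    (hcomm : ∀ g h : Γ, g * h = h * g)
    (hdet : ∀ g : Γ, Matrix.det ((g : Matrix.unitaryGroup (Fin 3) ℂ) : Matrix (Fin 3) (Fin 3) ℂ) = 1)
    (heig : ∀ g : Γ, g ≠ 1 →
      Matrix.det (((g : Matrix.unitaryGroup (Fin 3) ℂ) : Matrix (Fin 3) (Fin 3) ℂ) - 1) ≠ 0) :
    IsCyclic Γ ∧ Odd (Nat.card Γ) := by
  classical
  haveI : Fintype Γ := Fintype.ofFinite Γ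
  set M : Γ → Matrix (Fin 3) (Fin 3) ℂ := fun g => ((g : Matrix.unitaryGroup (Fin 3) ℂ) : Matrix (Fin 3) (Fin 3) ℂ) with hMdef
  constructor
  · -- cyclic
    obtain ⟨v, hv0, hev⟩ := exists_common_eigvec hcomm
    have hinj : ∀ a b : ℂ, a • v = b • v → a = b := by
      intro a b hab
      have h0 : (a - b) • v = 0 := by rw [sub_smul, hab, sub_self]
      rcases smul_eq_zero.mp h0 with h | h
      · exact sub_eq_zero.mp h
      · exact absurd h hv0
    choose χ hχ using hev
    have hmul : ∀ g h : Γ, χ (g * h) = χ g * χ h := by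
      intro g h
      apply hinj
      rw [← hχ]
      have : M (g * h) = M g * M h := rfl
      show M (g * h) *ᵥ v = _
      rw [this, ← Matrix.mulVec_mulVec]
      show M g *ᵥ (M h *ᵥ v) = _
      rw [hχ h, Matrix.mulVec_smul, hχ g, smul_smul, mul_comm (χ h)]
    have hone : χ 1 = 1 := by
      apply hinj
      rw [← hχ]
      show M 1 *ᵥ v = _
      have : M 1 = 1 := rfl
      rw [this, Matrix.one_mulVec, one_smul]
    set χ' : Γ →* ℂ := { toFun := χ, map_one' := hone, map_mul' := hmul } with hχ'
    have hker : ∀ g : Γ, χ' g = 1 → g = 1 := by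
      intro g hg
      by_contra hne
      have h1 : M g *ᵥ v = v := by
        have := hχ g
        rw [show χ g = χ' g from rfl, hg, one_smul] at this
        exact this
      have h2 : (M g - 1) *ᵥ v = 0 := by
        rw [Matrix.sub_mulVec, h1, Matrix.one_mulVec, sub_self]
      have h3 : Matrix.det (M g - 1) = 0 :=
        (Matrix.exists_mulVec_eq_zero_iff).mp ⟨v, hv0, h2⟩
      exact heig g hne h3
    exact isCyclic_of_subgroup_isDomain χ' ((injective_iff_map_eq_one χ').mpr hker)
  · -- odd order
    rw [← Nat.not_even_iff_odd]
    intro heven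
    have hdvd : 2 ∣ Fintype.card Γ := by
      rw [← Nat.card_eq_fintype_card]
      exact heven.two_dvd
    haveI : Fact (Nat.Prime 2) := ⟨Nat.prime_two⟩
    obtain ⟨g, hg⟩ := exists_prime_orderOf_dvd_card 2 hdvd
    have gne : g ≠ 1 := by
      intro h; rw [h, orderOf_one] at hg; norm_num at hg
    have hg2 : g ^ 2 = 1 := by rw [← hg]; exact pow_orderOf_eq_one g
    have hAA : M g * M g = 1 := by
      have : M (g ^ 2) = 1 := by rw [hg2]; rfl
      rw [show M (g ^ 2) = M g * M g from by rw [sq]; rfl] at this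
      exact this
    have hfact : (M g - 1) * (M g + 1) = M g * M g - 1 := by noncomm_ring
    rw [hAA, sub_self] at hfact
    have hU : IsUnit (M g - 1) :=
      (Matrix.isUnit_iff_isUnit_det _).mpr (isUnit_iff_ne_zero.mpr (heig g gne))
    have hA1 : M g + 1 = 0 := by
      have := hU.mul_left_cancel (by rw [hfact, mul_zero] : (M g - 1) * (M g + 1) = (M g - 1) * 0)
      exact this
    have hAneg : M g = -1 := by
      have := eq_neg_of_add_eq_zero_left hA1
      exact this
    have hdetg : Matrix.det (M g) = 1 := hdet g
    rw [hAneg, show (-1 : Matrix (Fin 3) (Fin 3) ℂ) = -(1 : Matrix (Fin 3) (Fin 3) ℂ) from rfl,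
      Matrix.det_neg, Matrix.det_one] at hdetg
    norm_num [Fintype.card_fin] at hdetg
end

section
/- Let m ≥ 1 be an integer and ζ ∈ ℂ a primitive m-th root of unity. A polynomial f ∈ ℂ[z₁,z₂,z₃] satisfies both f(ζ·z₁, ζ⁻¹·z₂, z₃) = f(z₁,z₂,z₃) and f(z₁, ζ·z₂, ζ⁻¹·z₃) = f(z₁,z₂,z₃) (as polynomial identities) if and only if f lies in the ℂ-subalgebra of ℂ[z₁,z₂,z₃] generated by the four polynomials z₁^m, z₂^m, z₃^m, and z₁z₂z₃. -/
/-!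
Both generators act diagonally, so a polynomial is invariant iff each of its monomials is.
The monomial `z^d` is invariant iff `ζ^(d₀ - d₁) = ζ^(d₁ - d₂) = 1`, i.e. iff
`d₀ ≡ d₁ ≡ d₂ (mod m)`; writing `r` for the common residue, such a monomial is
`(z₁z₂z₃)^r` times a monomial in `z₁^m, z₂^m, z₃^m`. Conversely the four generators are
invariant, hence so is the subalgebra they generate.
-/

open MvPolynomial

namespace MvPolynomial

variable {σ R : Type*} [CommSemiring R]

theorem aeval_C_mul_X_monomial (w : σ → R) (d : σ →₀ ℕ) (c : R) :
    aeval (fun i => C (w i) * X i) (monomial d c) =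
      monomial d ((d.prod fun i n => w i ^ n) * c) := by
  rw [aeval_monomial, monomial_eq, C_mul, algebraMap_eq]
  simp only [mul_pow, ← C_pow, Finsupp.prod_mul, ← map_finsuppProd C]
  ring

theorem coeff_aeval_C_mul_X (w : σ → R) (f : MvPolynomial σ R) (d : σ →₀ ℕ) :
    coeff d (aeval (fun i => C (w i) * X i) f) = (d.prod fun i n => w i ^ n) * coeff d f := by
  classical
  induction f using MvPolynomial.induction_on' with
  | monomial e c =>
    rw [aeval_C_mul_X_monomial, coeff_monomial, coeff_monomial]
    split_ifs with h
    · rw [h]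
    · rw [mul_zero]
  | add p q hp hq => rw [map_add, coeff_add, coeff_add, hp, hq, mul_add]

theorem prod_pow_eq_one_of_aeval_C_mul_X_eq_self [IsRightCancelMulZero R] {w : σ → R}
    {f : MvPolynomial σ R} (hf : aeval (fun i => C (w i) * X i) f = f) {d : σ →₀ ℕ}
    (hd : d ∈ f.support) : (d.prod fun i n => w i ^ n) = 1 := by
  have hcoeff := congrArg (coeff d) hf
  rw [coeff_aeval_C_mul_X] at hcoeff
  exact mul_right_cancel₀ (mem_support_iff.mp hd) (hcoeff.trans (one_mul _).symm)

end MvPolynomial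

theorem IsPrimitiveRoot.pow_mul_inv_pow_eq_one_iff {M : Type*} [CommGroupWithZero M] {ζ : M}
    {m : ℕ} (hζ : IsPrimitiveRoot ζ m) (hm : m ≠ 0) {a b : ℕ} :
    ζ ^ a * ζ⁻¹ ^ b = 1 ↔ a ≡ b [MOD m] := by
  rw [inv_pow, mul_inv_eq_one₀ (pow_ne_zero _ (hζ.ne_zero hm)),
    (hζ.isOfFinOrder hm).pow_eq_pow_iff_modEq, ← hζ.eq_orderOf]

section ThreeVariables

variable {R : Type*} [CommSemiring R]

theorem monomial_mem_adjoin_of_modEq {m : ℕ} {d : Fin 3 →₀ ℕ} (h01 : d 0 ≡ d 1 [MOD m])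
    (h12 : d 1 ≡ d 2 [MOD m]) (c : R) :
    monomial d c ∈ Algebra.adjoin R
      ({X 0 ^ m, X 1 ^ m, X 2 ^ m, X 0 * X 1 * X 2} : Set (MvPolynomial (Fin 3) R)) := by
  set r := d 0 % m
  obtain ⟨q₀, h₀⟩ : ∃ q, d 0 = r + m * q := ⟨_, (Nat.mod_add_div _ _).symm⟩
  obtain ⟨q₁, h₁⟩ : ∃ q, d 1 = r + m * q :=
    ⟨_, by rw [show r = d 1 % m from h01, Nat.mod_add_div]⟩
  obtain ⟨q₂, h₂⟩ : ∃ q, d 2 = r + m * q :=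
    ⟨_, by rw [show r = d 2 % m from h01.trans h12, Nat.mod_add_div]⟩
  have hmon : monomial d c =
      C c * (X 0 * X 1 * X 2) ^ r * (X 0 ^ m) ^ q₀ * (X 1 ^ m) ^ q₁ * (X 2 ^ m) ^ q₂ := by
    rw [monomial_eq, Finsupp.prod_pow, Fin.prod_univ_three, h₀, h₁, h₂]
    ring
  rw [hmon]
  refine mul_mem (mul_mem (mul_mem (mul_mem (Subalgebra.algebraMap_mem _ c) (pow_mem ?_ _))
    (pow_mem ?_ _)) (pow_mem ?_ _)) (pow_mem ?_ _) <;>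
    exact Algebra.subset_adjoin (by simp)

theorem aeval_C_mul_X_eq_self_of_mem_adjoin {m : ℕ} {w : Fin 3 → R} (hw : ∀ i, w i ^ m = 1)
    (hw' : w 0 * w 1 * w 2 = 1) {f : MvPolynomial (Fin 3) R}
    (hf : f ∈ Algebra.adjoin R {X 0 ^ m, X 1 ^ m, X 2 ^ m, X 0 * X 1 * X 2}) :
    aeval (fun i => C (w i) * X i) f = f := by
  refine AlgHom.adjoin_le_equalizer _ (AlgHom.id R _) ?_ hf
  rintro g (rfl | rfl | rfl | rfl)
  iterate 3 simp [mul_pow, ← C_pow, hw]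
  calc aeval (fun i => C (w i) * X i) (X 0 * X 1 * X 2)
      = C (w 0 * w 1 * w 2) * (X 0 * X 1 * X 2) := by simp only [map_mul, aeval_X]; ring
    _ = X 0 * X 1 * X 2 := by rw [hw', C_1, one_mul]

end ThreeVariables

/-- The invariant ring of `ℂ[z₁,z₂,z₃]` under `ℤ_m × ℤ_m ⊂ SU(3)` (generated by
`(z₁,z₂,z₃) ↦ (ζz₁, ζ⁻¹z₂, z₃)` and `(z₁,z₂,z₃) ↦ (z₁, ζz₂, ζ⁻¹z₃)`) is the
`ℂ`-subalgebra generated by `z₁^m, z₂^m, z₃^m, z₁z₂z₃`. -/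
theorem stmt_5 (m : ℕ) (hm : 1 ≤ m) (ζ : ℂ) (hζ : IsPrimitiveRoot ζ m)
    (f : MvPolynomial (Fin 3) ℂ) :
    ((aeval (![C ζ * X 0, C ζ⁻¹ * X 1, X 2] : Fin 3 → MvPolynomial (Fin 3) ℂ)) f = f ∧
     (aeval (![X 0, C ζ * X 1, C ζ⁻¹ * X 2] : Fin 3 → MvPolynomial (Fin 3) ℂ)) f = f) ↔
      f ∈ Algebra.adjoin ℂ
        ({X 0 ^ m, X 1 ^ m, X 2 ^ m, X 0 * X 1 * X 2} : Set (MvPolynomial (Fin 3) ℂ)) := by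
  have hm₀ : m ≠ 0 := by omega
  have hζ₀ : ζ ≠ 0 := hζ.ne_zero hm₀
  have hw₁ : (![C ζ * X 0, C ζ⁻¹ * X 1, X 2] : Fin 3 → MvPolynomial (Fin 3) ℂ) =
      fun i => C (![ζ, ζ⁻¹, 1] i) * X i := by
    funext i; fin_cases i <;> simp
  have hw₂ : (![X 0, C ζ * X 1, C ζ⁻¹ * X 2] : Fin 3 → MvPolynomial (Fin 3) ℂ) =
      fun i => C (![1, ζ, ζ⁻¹] i) * X i := by
    funext i; fin_cases i <;> simp
  rw [hw₁, hw₂]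
  constructor
  · rintro ⟨hf₁, hf₂⟩
    rw [f.as_sum]
    refine Subalgebra.sum_mem _ fun d hd => monomial_mem_adjoin_of_modEq ?_ ?_ _
    · rw [← hζ.pow_mul_inv_pow_eq_one_iff hm₀]
      simpa only [Finsupp.prod_pow, Fin.prod_univ_three, Matrix.cons_val, one_pow, mul_one,
        one_mul] using prod_pow_eq_one_of_aeval_C_mul_X_eq_self hf₁ hd
    · rw [← hζ.pow_mul_inv_pow_eq_one_iff hm₀]
      simpa only [Finsupp.prod_pow, Fin.prod_univ_three, Matrix.cons_val, one_pow, mul_one,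
        one_mul] using prod_pow_eq_one_of_aeval_C_mul_X_eq_self hf₂ hd
  · intro hf
    have hw : ∀ i, ![ζ, ζ⁻¹, 1] i ^ m = 1 ∧ ![1, ζ, ζ⁻¹] i ^ m = 1 := by
      intro i; fin_cases i <;> simp [inv_pow, hζ.pow_eq_one]
    exact ⟨aeval_C_mul_X_eq_self_of_mem_adjoin (fun i => (hw i).1) (by simp [hζ₀]) hf,
      aeval_C_mul_X_eq_self_of_mem_adjoin (fun i => (hw i).2) (by simp [hζ₀]) hf⟩
end

section
/- Let m ≥ 1 be an integer. The number of pairs (a,b) ∈ (ℤ/m)² whose weights satisfy w₁ + w₂ + w₃ = m (i.e. the number of elements of ℤ_m × ℤ_m of age 1) equals (m+4)(m−1)/2. -/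
/-- The number of age-1 elements of `ℤ_m × ℤ_m` (pairs `(a,b)` whose weights
`w₁ = a mod m`, `w₂ = (b−a) mod m`, `w₃ = (−b) mod m` satisfy `w₁+w₂+w₃ = m`)
equals `(m+4)(m−1)/2`. -/
theorem stmt_11 (m : ℕ) (hm : 1 ≤ m) :
    Nat.card {p : ZMod m × ZMod m // p.1.val + (p.2 - p.1).val + (-p.2).val = m} =
      (m + 4) * (m - 1) / 2 := by
  haveI : NeZero m := ⟨by omega⟩
  set F : Finset (ℕ × ℕ) :=
    (Finset.range m ×ˢ Finset.range m).filter (fun q => 0 < q.1 + q.2 ∧ q.1 + q.2 ≤ m) with hF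
  have key : ∀ q : ℕ × ℕ, q ∈ F ↔ q.1 < m ∧ q.2 < m ∧ 0 < q.1 + q.2 ∧ q.1 + q.2 ≤ m := by
    intro q; simp [hF, Finset.mem_filter, Finset.mem_product, and_assoc]
  -- equivalence with F
  have e : {p : ZMod m × ZMod m // p.1.val + (p.2 - p.1).val + (-p.2).val = m} ≃
      {q : ℕ × ℕ // q ∈ F} := by
    refine ⟨fun p => ⟨(p.1.1.val, (p.1.2 - p.1.1).val), ?_⟩,
      fun q => ⟨(((q.1.1 : ZMod m)), ((q.1.1 + q.1.2 : ℕ) : ZMod m)), ?_⟩, ?_, ?_⟩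
    · obtain ⟨⟨a, b⟩, h⟩ := p
      have h1 := ZMod.val_lt a
      have h2 := ZMod.val_lt (b - a)
      have h3 := ZMod.val_lt (-b)
      rw [key]
      simp only at h ⊢
      omega
    · obtain ⟨⟨x, y⟩, hq⟩ := q
      rw [key] at hq
      obtain ⟨hx, hy, hpos, hle⟩ := hq
      simp only
      have e1 : ((x : ZMod m)).val = x := ZMod.val_natCast_of_lt hx
      have e2 : (((x + y : ℕ) : ZMod m) - (x : ZMod m)) = (y : ZMod m) := by
        push_cast; ring
      have e2' : (((x + y : ℕ) : ZMod m) - (x : ZMod m)).val = y := by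
        rw [e2]; exact ZMod.val_natCast_of_lt hy
      rcases eq_or_lt_of_le hle with heq | hlt
      · have hz : ((x + y : ℕ) : ZMod m) = 0 := by
          rw [heq]; exact ZMod.natCast_self m
        rw [e1, e2', hz, neg_zero, ZMod.val_zero]
        omega
      · have ev : (((x + y : ℕ)) : ZMod m).val = x + y := ZMod.val_natCast_of_lt hlt
        have hnz : ((x + y : ℕ) : ZMod m) ≠ 0 := by
          intro h0
          rw [h0, ZMod.val_zero] at ev
          omega
        rw [e1, e2', ZMod.neg_val, if_neg hnz, ev]
        omega
    · rintro ⟨⟨a, b⟩, h⟩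
      ext
      · simp [ZMod.natCast_val, ZMod.cast_id]
      · simp only
        push_cast [ZMod.natCast_val, ZMod.cast_id]
        ring
    · rintro ⟨⟨x, y⟩, hq⟩
      rw [key] at hq
      obtain ⟨hx, hy, hpos, hle⟩ := hq
      have e2 : (((x + y : ℕ) : ZMod m) - (x : ZMod m)) = (y : ZMod m) := by
        push_cast; ring
      ext
      · exact ZMod.val_natCast_of_lt hx
      · simp only
        rw [e2]; exact ZMod.val_natCast_of_lt hy
  rw [Nat.card_congr e, Nat.card_eq_finsetCard]
  -- now compute F.card
  have hcard : F.card = ∑ a ∈ Finset.range m,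
      ((Finset.range m).filter (fun b => 0 < a + b ∧ a + b ≤ m)).card := by
    rw [hF, Finset.card_filter, Finset.sum_product]
    refine Finset.sum_congr rfl fun a _ => ?_
    rw [Finset.card_filter]
  rw [hcard]
  have hfib : ∀ a ∈ Finset.range m,
      ((Finset.range m).filter (fun b => 0 < a + b ∧ a + b ≤ m)).card =
        if a = 0 then m - 1 else m + 1 - a := by
    intro a ha
    rw [Finset.mem_range] at ha
    rcases eq_or_ne a 0 with rfl | h
    · rw [if_pos rfl]
      have : (Finset.range m).filter (fun b => 0 < 0 + b ∧ 0 + b ≤ m) = Finset.Ico 1 m := by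
        ext b; simp [Finset.mem_filter, Finset.mem_range, Finset.mem_Ico]; omega
      rw [this, Nat.card_Ico]
    · rw [if_neg h]
      have : (Finset.range m).filter (fun b => 0 < a + b ∧ a + b ≤ m) =
          Finset.range (m + 1 - a) := by
        ext b; simp [Finset.mem_filter, Finset.mem_range]; omega
      rw [this, Finset.card_range]
  rw [Finset.sum_congr rfl hfib]
  -- split off a = 0
  have hins : Finset.range m = insert 0 (Finset.Ico 1 m) := by
    ext x; simp [Finset.mem_range, Finset.mem_Ico]; omega
  rw [hins, Finset.sum_insert (by simp), if_pos rfl]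
  have hsum2 : ∑ a ∈ Finset.Ico 1 m, (if a = 0 then m - 1 else m + 1 - a) =
      ∑ a ∈ Finset.Ico 1 m, (m + 1 - a) := by
    refine Finset.sum_congr rfl fun a ha => ?_
    rw [Finset.mem_Ico] at ha
    rw [if_neg (by omega)]
  rw [hsum2, Finset.sum_Ico_eq_sum_range]
  have hrefl : ∑ i ∈ Finset.range (m - 1), (m + 1 - (1 + i)) =
      ∑ i ∈ Finset.range (m - 1), (i + 2) := by
    rw [← Finset.sum_range_reflect (fun i => i + 2) (m - 1)]
    refine Finset.sum_congr rfl fun i hi => ?_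
    rw [Finset.mem_range] at hi
    omega
  rw [hrefl, Finset.sum_add_distrib, Finset.sum_const, Finset.card_range]
  have hg : (∑ i ∈ Finset.range (m - 1), i) * 2 = (m - 1) * (m - 1 - 1) :=
    Finset.sum_range_id_mul_two (m - 1)
  obtain ⟨n, rfl⟩ : ∃ n, m = n + 1 := ⟨m - 1, by omega⟩
  simp only [Nat.add_sub_cancel] at hg ⊢
  symm
  apply Nat.div_eq_of_eq_mul_left (by norm_num)
  rcases Nat.eq_zero_or_pos n with rfl | hn
  · simp at hg ⊢
  · obtain ⟨k, rfl⟩ : ∃ k, n = k + 1 := ⟨n - 1, by omega⟩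
    simp only [Nat.add_sub_cancel, smul_eq_mul] at hg ⊢
    nlinarith [hg]
end
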